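/- Let m = 1 and S = 1, so C₋, C₊ ∈ ℂ^{1×n} are row vectors, and set g = C₋C₋† − C₊C₊† ∈ ℝ (a 1×1 matrix identified with a real number). Suppose the matrix form of the commutator condition [L−L*, H] = 0 holds, namely (C₋ − conj(C₊))·Ω₋ = (C₊ − conj(C₋))·Ω₊† and (C₋ − conj(C₊))·Ω₊ = (C₊ − conj(C₋))·Ω₋ᵀ, where conj denotes entrywise complex conjugation. Then for every s ∈ ℂ with sI_{2n} − A invertible and s + g/2 ≠ 0, one has G_pp[s] = (s − g/2)/(s + g/2) and G_pq[s] = 0; in particular, the output quadrature p_out is insensitive to the input quadrature q_in (a unilateral BAE measurement). -/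
import Mathlib


open Matrix

noncomputable section

namespace LQS

/-- Entrywise real part, as a complex matrix. -/
def matRe {k l : ℕ} (X : Matrix (Fin k) (Fin l) ℂ) : Matrix (Fin k) (Fin l) ℂ :=
  fun i j => ((X i j).re : ℂ)

/-- Entrywise imaginary part, as a complex matrix. -/
def matIm {k l : ℕ} (X : Matrix (Fin k) (Fin l) ℂ) : Matrix (Fin k) (Fin l) ℂ :=
  fun i j => ((X i j).im : ℂ)

/-- A complex matrix has real entries. -/
def isReal {k l : ℕ} (X : Matrix (Fin k) (Fin l) ℂ) : Prop := ∀ i j, (X i j).im = 0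

/-- A complex matrix is purely imaginary (every entry has zero real part). -/
def isPurelyImag {k l : ℕ} (X : Matrix (Fin k) (Fin l) ℂ) : Prop := ∀ i j, (X i j).re = 0

/-- The symplectic matrix J_k = [[0, I],[−I, 0]]. -/
def Jmat (k : ℕ) : Matrix (Fin k ⊕ Fin k) (Fin k ⊕ Fin k) ℂ :=
  fromBlocks 0 1 (-1) 0

/-- D = [[Re S, −Im S],[Im S, Re S]]. -/
def quadD {m : ℕ} (S : Matrix (Fin m) (Fin m) ℂ) :
    Matrix (Fin m ⊕ Fin m) (Fin m ⊕ Fin m) ℂ :=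
  fromBlocks (matRe S) (-(matIm S)) (matIm S) (matRe S)

/-- C = [[Re(C₋+C₊), −Im(C₋−C₊)],[Im(C₋+C₊), Re(C₋−C₊)]]. -/
def quadC {m n : ℕ} (Cm Cp : Matrix (Fin m) (Fin n) ℂ) :
    Matrix (Fin m ⊕ Fin m) (Fin n ⊕ Fin n) ℂ :=
  fromBlocks (matRe (Cm + Cp)) (-(matIm (Cm - Cp))) (matIm (Cm + Cp)) (matRe (Cm - Cp))

/-- B = −[[Re((C₋−C₊)†), −Im((C₋−C₊)†)],[Im((C₋+C₊)†), Re((C₋+C₊)†)]]·D. -/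
def quadB {m n : ℕ} (S : Matrix (Fin m) (Fin m) ℂ) (Cm Cp : Matrix (Fin m) (Fin n) ℂ) :
    Matrix (Fin n ⊕ Fin n) (Fin m ⊕ Fin m) ℂ :=
  -(fromBlocks (matRe (Cm - Cp)ᴴ) (-(matIm (Cm - Cp)ᴴ))
      (matIm (Cm + Cp)ᴴ) (matRe (Cm + Cp)ᴴ)) * quadD S

/-- JH = [[Im(Ω₋+Ω₊), Re(Ω₋−Ω₊)],[−Re(Ω₋+Ω₊), Im(Ω₋−Ω₊)]]. -/
def quadJH {n : ℕ} (Om Op : Matrix (Fin n) (Fin n) ℂ) :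
    Matrix (Fin n ⊕ Fin n) (Fin n ⊕ Fin n) ℂ :=
  fromBlocks (matIm (Om + Op)) (matRe (Om - Op)) (-(matRe (Om + Op))) (matIm (Om - Op))

/-- C♯ = −J_n·Cᵀ·J_m. -/
def quadCsharp {m n : ℕ} (Cm Cp : Matrix (Fin m) (Fin n) ℂ) :
    Matrix (Fin n ⊕ Fin n) (Fin m ⊕ Fin m) ℂ :=
  -(Jmat n) * (quadC Cm Cp)ᵀ * (Jmat m)

/-- A = JH − (1/2)·C♯·C. -/
def quadA {m n : ℕ} (Cm Cp : Matrix (Fin m) (Fin n) ℂ) (Om Op : Matrix (Fin n) (Fin n) ℂ) :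
    Matrix (Fin n ⊕ Fin n) (Fin n ⊕ Fin n) ℂ :=
  quadJH Om Op - (1/2 : ℂ) • (quadCsharp Cm Cp * quadC Cm Cp)

/-- Transfer matrix G[s] = D + C(sI − A)⁻¹B. -/
def transferG {m n : ℕ} (S : Matrix (Fin m) (Fin m) ℂ) (Cm Cp : Matrix (Fin m) (Fin n) ℂ)
    (Om Op : Matrix (Fin n) (Fin n) ℂ) (s : ℂ) :
    Matrix (Fin m ⊕ Fin m) (Fin m ⊕ Fin m) ℂ :=
  quadD S + quadC Cm Cp *
    (s • (1 : Matrix (Fin n ⊕ Fin n) (Fin n ⊕ Fin n) ℂ) - quadA Cm Cp Om Op)⁻¹ *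
    quadB S Cm Cp

end LQS

open LQS Matrix

namespace LQSAux

lemma matRe_conjT {k l : ℕ} (X : Matrix (Fin k) (Fin l) ℂ) : matRe Xᴴ = (matRe X)ᵀ := by
  ext i j; simp [matRe, conjTranspose_apply]
lemma matIm_conjT {k l : ℕ} (X : Matrix (Fin k) (Fin l) ℂ) : matIm Xᴴ = -(matIm X)ᵀ := by
  ext i j; simp [matIm, conjTranspose_apply]

lemma Csharp_blocks {m n : ℕ} (Cm Cp : Matrix (Fin m) (Fin n) ℂ) :
    quadCsharp Cm Cp = fromBlocks (matRe (Cm - Cp)ᴴ) (-(matIm (Cm - Cp)ᴴ))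
      (matIm (Cm + Cp)ᴴ) (matRe (Cm + Cp)ᴴ) := by
  unfold quadCsharp Jmat quadC
  rw [Matrix.fromBlocks_transpose]
  simp only [matRe_conjT, matIm_conjT, neg_neg, fromBlocks_neg, fromBlocks_multiply,
    Matrix.neg_mul]
  ext (i|i) (j|j) <;> simp [fromBlocks, matRe, matIm]

lemma quadD_one : quadD (1 : Matrix (Fin 1) (Fin 1) ℂ) = 1 := by
  ext (i|i) (j|j) <;> simp [quadD, matRe, matIm, fromBlocks, Matrix.one_apply, Fin.ext_iff]

lemma quadB_eq {n : ℕ} (Cm Cp : Matrix (Fin 1) (Fin n) ℂ) :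
    quadB (1 : Matrix (Fin 1) (Fin 1) ℂ) Cm Cp = -quadCsharp Cm Cp := by
  rw [quadB, quadD_one, Matrix.mul_one, Csharp_blocks]

def prw {a : Type*} (X : Matrix (Fin 1 ⊕ Fin 1) a ℂ) : Matrix (Fin 1) a ℂ :=
  Matrix.of fun _ j => X (Sum.inr 0) j

lemma prw_mul {a b : Type*} [Fintype a] (X : Matrix (Fin 1 ⊕ Fin 1) a ℂ) (Y : Matrix a b ℂ) :
    prw (X * Y) = prw X * Y := by
  ext i j; simp [prw, Matrix.mul_apply]

lemma prw_add {a : Type*} (X Y : Matrix (Fin 1 ⊕ Fin 1) a ℂ) :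
    prw (X + Y) = prw X + prw Y := by
  ext i j; simp [prw]

def pSel : Matrix (Fin 1) (Fin 1 ⊕ Fin 1) ℂ := prw 1

lemma pSel_mul {b : Type*} [Fintype b] (X : Matrix (Fin 1 ⊕ Fin 1) b ℂ) : pSel * X = prw X := by
  rw [pSel, ← prw_mul, Matrix.one_mul]

lemma prwC_Csharp {n : ℕ} (Cm Cp : Matrix (Fin 1) (Fin n) ℂ) (g : ℝ)
    (hg : (g : ℂ) = (Cm * Cmᴴ - Cp * Cpᴴ) 0 0) :
    prw (quadC Cm Cp) * quadCsharp Cm Cp = (g : ℂ) • pSel := by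
  ext i (j|j) <;> obtain rfl : j = 0 := Subsingleton.elim j 0
  · -- q column : 0
    rw [Matrix.mul_apply]
    rw [Fintype.sum_sum_type]
    simp only [Csharp_blocks, prw, quadC, fromBlocks_apply₂₁, fromBlocks_apply₂₂,
      fromBlocks_apply₁₁, fromBlocks_apply₂₁, Matrix.of_apply, matRe, matIm,
      conjTranspose_apply, Complex.sub_re, Complex.sub_im, Complex.add_re, Complex.add_im]
    have hsel : ((g : ℂ) • pSel) i (Sum.inl (0 : Fin 1)) = 0 := by
      simp [pSel, prw, Matrix.one_apply]
    rw [hsel, ← Finset.sum_add_distrib]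
    apply Finset.sum_eq_zero
    intro k _
    simp only [Matrix.sub_apply, Matrix.add_apply, Complex.star_def, Complex.conj_re,
      Complex.conj_im, Complex.sub_re, Complex.sub_im, Complex.add_re, Complex.add_im]
    push_cast
    ring
  · -- p column : g
    rw [Matrix.mul_apply, Fintype.sum_sum_type]
    simp only [Csharp_blocks, prw, quadC, fromBlocks_apply₂₁, fromBlocks_apply₂₂,
      fromBlocks_apply₁₂, Matrix.of_apply, matRe, matIm, conjTranspose_apply,
      Matrix.neg_apply]
    have hsel : ((g : ℂ) • pSel) i (Sum.inr (0 : Fin 1)) = (g : ℂ) := by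
      simp [pSel, prw, Matrix.one_apply]
    rw [hsel, hg, Matrix.sub_apply, Matrix.mul_apply, Matrix.mul_apply,
      ← Finset.sum_sub_distrib, ← Finset.sum_add_distrib]
    apply Finset.sum_congr rfl
    intro k _
    simp only [Matrix.sub_apply, Matrix.add_apply, conjTranspose_apply, Complex.star_def,
      Complex.conj_re, Complex.conj_im, Complex.sub_re, Complex.sub_im, Complex.add_re,
      Complex.add_im, Complex.mul_conj, Complex.normSq_apply]
    push_cast
    ring


lemma prwC_JH {n : ℕ} (Cm Cp : Matrix (Fin 1) (Fin n) ℂ)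
    (Om Op : Matrix (Fin n) (Fin n) ℂ)
    (hOmH : Omᴴ = Om) (hOpS : Opᵀ = Op)
    (hQND1 : (Cm - Cp.map (starRingEnd ℂ)) * Om = (Cp - Cm.map (starRingEnd ℂ)) * Opᴴ)
    (hQND2 : (Cm - Cp.map (starRingEnd ℂ)) * Op = (Cp - Cm.map (starRingEnd ℂ)) * Omᵀ) :
    prw (quadC Cm Cp) * quadJH Om Op = 0 := by
  set u : Matrix (Fin 1) (Fin n) ℂ := Cm - Cp.map (starRingEnd ℂ) with hu
  set v : Matrix (Fin 1) (Fin n) ℂ := Cp - Cm.map (starRingEnd ℂ) with hv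
  have hOmT : Omᵀ = Om.map (starRingEnd ℂ) := by
    conv_lhs => rw [← hOmH]
    ext i j
    simp [conjTranspose_apply, Matrix.map_apply]
  have hOpH : Opᴴ = Op.map (starRingEnd ℂ) := by
    conv_lhs => rw [← hOpS]
    ext i j
    simp [conjTranspose_apply, Matrix.map_apply]
  have hum : u.map (starRingEnd ℂ) = Cm.map (starRingEnd ℂ) - Cp := by
    ext i j
    simp [hu, Matrix.map_apply]
  have hmapadd : (Om + Op).map (starRingEnd ℂ)
      = Om.map (starRingEnd ℂ) + Op.map (starRingEnd ℂ) := by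
    ext i j; simp [Matrix.map_apply]
  have hmapsub : (Om - Op).map (starRingEnd ℂ)
      = Om.map (starRingEnd ℂ) - Op.map (starRingEnd ℂ) := by
    ext i j; simp [Matrix.map_apply]
  have hvu : v = -(u.map (starRingEnd ℂ)) := by
    ext i j
    simp [hu, hv, Matrix.map_apply]
  have hSum : u * (Om + Op) = -((u * (Om + Op)).map (starRingEnd ℂ)) := by
    rw [Matrix.map_mul, hmapadd, hum, Matrix.mul_add, hQND1, hQND2, hOpH, hOmT, hvu, hum]
    simp only [Matrix.neg_mul, Matrix.mul_add, Matrix.sub_mul, neg_sub]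
    abel
  have hDiff : u * (Om - Op) = (u * (Om - Op)).map (starRingEnd ℂ) := by
    rw [Matrix.map_mul, hmapsub, hum, Matrix.mul_sub, hQND1, hQND2, hOpH, hOmT, hvu, hum]
    simp only [Matrix.neg_mul, Matrix.mul_sub, Matrix.sub_mul, neg_sub]
    abel
  have hre : ∀ k, ((u * (Om + Op)) 0 k).re = 0 := by
    intro k
    have h := congrFun (congrFun hSum 0) k
    simp only [Matrix.neg_apply, Matrix.map_apply] at h
    have := congrArg Complex.re h
    simp only [Complex.neg_re, Complex.conj_re] at this
    linarith
  have him : ∀ k, ((u * (Om - Op)) 0 k).im = 0 := by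
    intro k
    have h := congrFun (congrFun hDiff 0) k
    simp only [Matrix.map_apply] at h
    have := congrArg Complex.im h
    simp only [Complex.conj_im] at this
    linarith
  ext i (k|k)
  · rw [Matrix.mul_apply, Fintype.sum_sum_type]
    simp only [quadJH, quadC, prw, Matrix.of_apply, fromBlocks_apply₂₁, fromBlocks_apply₂₂,
      fromBlocks_apply₁₁, Matrix.neg_apply, matRe, matIm, Matrix.zero_apply]
    rw [← Finset.sum_add_distrib]
    have key : ∀ j : Fin n, (((((Cm + Cp) 0 j).im : ℝ) : ℂ) * (((Om + Op) j k).im : ℂ) +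
        ((((Cm - Cp) 0 j).re : ℝ) : ℂ) * (-(((Om + Op) j k).re : ℂ)))
        = -(((u 0 j * (Om + Op) j k).re : ℝ) : ℂ) := by
      intro j
      simp only [hu, Matrix.sub_apply, Matrix.add_apply, Matrix.map_apply, Complex.mul_re,
        Complex.sub_re, Complex.sub_im, Complex.add_re, Complex.add_im, Complex.conj_re,
        Complex.conj_im]
      push_cast
      ring
    rw [Finset.sum_congr rfl (fun j _ => key j)]
    have : (∑ j : Fin n, -((((u 0 j * (Om + Op) j k).re : ℝ)) : ℂ))
        = -((((u * (Om + Op)) 0 k).re : ℝ) : ℂ) := by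
      rw [Matrix.mul_apply, Complex.re_sum]
      push_cast
      rw [Finset.sum_neg_distrib]
    rw [this, hre k]
    simp
  · rw [Matrix.mul_apply, Fintype.sum_sum_type]
    simp only [quadJH, quadC, prw, Matrix.of_apply, fromBlocks_apply₂₁, fromBlocks_apply₂₂,
      fromBlocks_apply₁₂, matRe, matIm, Matrix.zero_apply]
    rw [← Finset.sum_add_distrib]
    have key : ∀ j : Fin n, (((((Cm + Cp) 0 j).im : ℝ) : ℂ) * (((Om - Op) j k).re : ℂ) +
        ((((Cm - Cp) 0 j).re : ℝ) : ℂ) * ((((Om - Op) j k).im : ℝ) : ℂ))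
        = (((u 0 j * (Om - Op) j k).im : ℝ) : ℂ) := by
      intro j
      simp only [hu, Matrix.sub_apply, Matrix.add_apply, Matrix.map_apply, Complex.mul_im,
        Complex.sub_re, Complex.sub_im, Complex.add_re, Complex.add_im, Complex.conj_re,
        Complex.conj_im]
      push_cast
      ring
    rw [Finset.sum_congr rfl (fun j _ => key j)]
    have : (∑ j : Fin n, ((((u 0 j * (Om - Op) j k).im : ℝ)) : ℂ))
        = ((((u * (Om - Op)) 0 k).im : ℝ) : ℂ) := by
      rw [Matrix.mul_apply, Complex.im_sum]
      push_cast
      ring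
    rw [this, him k]
    simp

end LQSAux


open LQSAux


/-- SISO case (m = 1, S = 1): under the matrix form of [L−L*, H] = 0,
G_pp[s] = (s − g/2)/(s + g/2) and G_pq[s] = 0, where
g = C₋C₋† − C₊C₊†. -/
theorem stmt_9 {n : ℕ} (hn : 1 ≤ n)
    (Cm Cp : Matrix (Fin 1) (Fin n) ℂ)
    (Om Op : Matrix (Fin n) (Fin n) ℂ)
    (hOmH : Omᴴ = Om) (hOpS : Opᵀ = Op)
    (g : ℝ) (hg : (g : ℂ) = (Cm * Cmᴴ - Cp * Cpᴴ) 0 0)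
    (hQND1 : (Cm - Cp.map (starRingEnd ℂ)) * Om = (Cp - Cm.map (starRingEnd ℂ)) * Opᴴ)
    (hQND2 : (Cm - Cp.map (starRingEnd ℂ)) * Op = (Cp - Cm.map (starRingEnd ℂ)) * Omᵀ) :
    ∀ s : ℂ,
      IsUnit (s • (1 : Matrix (Fin n ⊕ Fin n) (Fin n ⊕ Fin n) ℂ) - quadA Cm Cp Om Op) →
      s + (g : ℂ)/2 ≠ 0 →
      (transferG (1 : Matrix (Fin 1) (Fin 1) ℂ) Cm Cp Om Op s).toBlocks₂₂ 0 0
          = (s - (g : ℂ)/2) / (s + (g : ℂ)/2) ∧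
      (transferG (1 : Matrix (Fin 1) (Fin 1) ℂ) Cm Cp Om Op s).toBlocks₂₁ = 0 := by
  intro s hUnit hs
  set M : Matrix (Fin n ⊕ Fin n) (Fin n ⊕ Fin n) ℂ :=
    s • (1 : Matrix (Fin n ⊕ Fin n) (Fin n ⊕ Fin n) ℂ) - quadA Cm Cp Om Op with hMdef
  have hJH := prwC_JH Cm Cp Om Op hOmH hOpS hQND1 hQND2
  have hCs := prwC_Csharp Cm Cp g hg
  have hA : prw (quadC Cm Cp) * quadA Cm Cp Om Op = (-((g : ℂ)/2)) • prw (quadC Cm Cp) := by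
    rw [quadA, Matrix.mul_sub, hJH, Matrix.mul_smul, ← Matrix.mul_assoc, hCs,
      Matrix.smul_mul, pSel_mul, smul_smul, zero_sub, ← neg_smul]
    congr 1
    ring
  have hM : prw (quadC Cm Cp) * M = (s + (g : ℂ)/2) • prw (quadC Cm Cp) := by
    rw [hMdef, Matrix.mul_sub, hA, Matrix.mul_smul, Matrix.mul_one, ← sub_smul]
    congr 1
    ring
  have hdet : IsUnit M.det := (Matrix.isUnit_iff_isUnit_det M).mp hUnit
  have hinv : prw (quadC Cm Cp) * M⁻¹ = (s + (g : ℂ)/2)⁻¹ • prw (quadC Cm Cp) := by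
    have h2 : (s + (g : ℂ)/2) • (prw (quadC Cm Cp) * M⁻¹) = prw (quadC Cm Cp) := by
      rw [← Matrix.smul_mul, ← hM, Matrix.mul_assoc, Matrix.mul_nonsing_inv _ hdet,
        Matrix.mul_one]
    calc prw (quadC Cm Cp) * M⁻¹
        = ((s + (g : ℂ)/2)⁻¹ * (s + (g : ℂ)/2)) • (prw (quadC Cm Cp) * M⁻¹) := by
          rw [inv_mul_cancel₀ hs, one_smul]
      _ = (s + (g : ℂ)/2)⁻¹ • prw (quadC Cm Cp) := by rw [mul_smul, h2]
  have hB : prw (quadC Cm Cp) * quadB (1 : Matrix (Fin 1) (Fin 1) ℂ) Cm Cp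
      = (-(g : ℂ)) • pSel := by
    rw [quadB_eq, Matrix.mul_neg, hCs, neg_smul]
  have hG : prw (transferG (1 : Matrix (Fin 1) (Fin 1) ℂ) Cm Cp Om Op s)
      = ((s - (g : ℂ)/2)/(s + (g : ℂ)/2)) • pSel := by
    rw [transferG, prw_add, ← hMdef, prw_mul, prw_mul, hinv, Matrix.smul_mul, hB,
      quadD_one]
    have : prw (1 : Matrix (Fin 1 ⊕ Fin 1) (Fin 1 ⊕ Fin 1) ℂ) = pSel := rfl
    rw [this, smul_smul, ← one_smul ℂ pSel, smul_smul, ← add_smul]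
    congr 1
    rw [eq_div_iff hs]
    linear_combination (-(g : ℂ)) * inv_mul_cancel₀ hs
    exact (one_smul ℂ pSel).symm
  constructor
  · have h1 : (transferG (1 : Matrix (Fin 1) (Fin 1) ℂ) Cm Cp Om Op s).toBlocks₂₂ 0 0
        = prw (transferG (1 : Matrix (Fin 1) (Fin 1) ℂ) Cm Cp Om Op s) 0 (Sum.inr 0) := rfl
    rw [h1, hG]
    simp [pSel, prw, Matrix.one_apply]
  · ext i j
    have h1 : (transferG (1 : Matrix (Fin 1) (Fin 1) ℂ) Cm Cp Om Op s).toBlocks₂₁ i j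
        = prw (transferG (1 : Matrix (Fin 1) (Fin 1) ℂ) Cm Cp Om Op s) 0 (Sum.inl j) := by
      rw [Subsingleton.elim i (0 : Fin 1)]; rfl
    rw [h1, hG]
    simp [pSel, prw, Matrix.one_apply]
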